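/- For the constructed partition Σⁿ = B_n^1 ⊔ ⋯ ⊔ B_n^m, any two distinct sequences in the same class B_n^i have edit distance at least 2; consequently for s ∈ B_n^i, |N_n^1(s) ∩ B_n^i| = 1, and for s ∉ B_n^i, |N_n^1(s) ∩ B_n^i| = n. -/

import Mathlib

/-- Costs of the edit operations (removed from Mathlib; restored with its old meaning). -/
structure Levenshtein.Cost (α β δ : Type*) where
  delete : α → δ
  insert : β → δ
  substitute : α → β → δ

/-- The default (unit) costs, as in the old Mathlib. -/
def Levenshtein.defaultCost {α : Type*} [DecidableEq α] : Levenshtein.Cost α α ℕ where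
  delete _ := 1
  insert _ := 1
  substitute a b := if a = b then 0 else 1

/-- Levenshtein distance, by the recursion the old Mathlib proved for its `levenshtein`. -/
def levenshtein {α β δ : Type*} [Add δ] [Zero δ] [Min δ] (C : Levenshtein.Cost α β δ) :
    List α → List β → δ
  | [], [] => 0
  | [], y :: ys => C.insert y + levenshtein C [] ys
  | x :: xs, [] => C.delete x + levenshtein C xs []
  | x :: xs, y :: ys =>
    min (C.delete x + levenshtein C xs (y :: ys))
      (min (C.insert y + levenshtein C (x :: xs) ys) (C.substitute x y + levenshtein C xs ys))

/-- Edit (Levenshtein) distance between two sequences represented as lists. -/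
def editDistL {α : Type*} [DecidableEq α] (s t : List α) : ℕ :=
  levenshtein Levenshtein.defaultCost s t

/-- The recursive partition classes of `(ZMod m)ⁿ`: `B 1 i = {[i]}` and
`B (n+1) i = ⋃_{c} c ∘ B n (i + c)` (prepending `c` pairs it with the class `i + c`,
realizing the rotation `j(i,k) = ((i + k - 2) mod m) + 1` in 0-indexed form). -/
def Bset (m : ℕ) : ℕ → ZMod m → Set (List (ZMod m))
  | 0, _ => {[]}
  | 1, i => {[i]}
  | (n + 2), i => ⋃ c : ZMod m, (fun l => c :: l) '' Bset m (n + 1) (i + c)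

/-! Membership of `(c₁, …, cₙ)` in `B_n^i` is the single linear condition
`cₙ - (c₁ + ⋯ + cₙ₋₁) = i`, and with all other coordinates fixed this class index is a bijective
function of any one coordinate. Between lists of equal length, edit distance at most one means
one substitution. So two members of a class are never one substitution apart, while from a list
outside `B_n^i` each of the `n` positions admits exactly one substitution into `B_n^i`. -/

section EditDistance

variable {α : Type*} [DecidableEq α]

@[simp] lemma editDistL_nil_nil : editDistL ([] : List α) [] = 0 := by
  simp [editDistL, levenshtein]

@[simp] lemma editDistL_nil_cons (y : α) (ys : List α) :
    editDistL [] (y :: ys) = editDistL [] ys + 1 := by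
  simp [editDistL, levenshtein, Levenshtein.defaultCost, Nat.add_comm]

@[simp] lemma editDistL_cons_nil (x : α) (xs : List α) :
    editDistL (x :: xs) [] = editDistL xs [] + 1 := by
  simp [editDistL, levenshtein, Levenshtein.defaultCost, Nat.add_comm]

lemma editDistL_cons_cons (x y : α) (xs ys : List α) :
    editDistL (x :: xs) (y :: ys) =
      min (editDistL xs (y :: ys) + 1)
        (min (editDistL (x :: xs) ys + 1) (editDistL xs ys + if x = y then 0 else 1)) := by
  simp only [editDistL, levenshtein, Levenshtein.defaultCost, Nat.add_comm]

lemma editDistL_eq_zero_iff {s t : List α} : editDistL s t = 0 ↔ s = t := by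
  induction s generalizing t with
  | nil => cases t <;> simp
  | cons a s ih =>
    cases t with
    | nil => simp
    | cons b t =>
      rw [editDistL_cons_cons]
      split_ifs with hab <;> simp [hab, ih]

@[simp] lemma editDistL_self (s : List α) : editDistL s s = 0 :=
  editDistL_eq_zero_iff.mpr rfl

lemma editDistL_set_le_one (s : List α) (p : ℕ) (y : α) : editDistL s (s.set p y) ≤ 1 := by
  induction s generalizing p with
  | nil => simp
  | cons a s ih =>
    cases p with
    | zero => simp only [List.set_cons_zero, editDistL_cons_cons]; split_ifs <;> simp
    | succ p => simpa [editDistL_cons_cons] using Or.inr (Or.inr (ih p))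

lemma eq_or_exists_set_of_editDistL_le_one {s t : List α} (hlen : s.length = t.length)
    (h : editDistL s t ≤ 1) : t = s ∨ ∃ p < s.length, ∃ y, t = s.set p y := by
  induction s generalizing t with
  | nil => exact .inl (List.eq_nil_of_length_eq_zero hlen.symm)
  | cons a s ih =>
    cases t with
    | nil => simp at hlen
    | cons b t =>
      simp only [List.length_cons, Nat.add_right_cancel_iff] at hlen
      rw [editDistL_cons_cons] at h
      simp only [min_le_iff] at h
      rcases h with h | h | h
      · have hs : s = b :: t := editDistL_eq_zero_iff.mp (by omega)
        simp [hs] at hlen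
      · have ht : a :: s = t := editDistL_eq_zero_iff.mp (by omega)
        simp [← ht] at hlen
      · by_cases hab : a = b
        · subst hab
          rcases ih hlen (by simpa using h) with rfl | ⟨p, hp, y, rfl⟩
          · exact .inl rfl
          · exact .inr ⟨p + 1, by simpa using hp, y, rfl⟩
        · obtain rfl := editDistL_eq_zero_iff.mp (by simp [hab] at h; omega : editDistL s t = 0)
          exact .inr ⟨0, by simp, b, rfl⟩

end EditDistance

section Fiber

variable {α β : Type*} [DecidableEq α] {f : List α → β}

lemma eq_of_editDistL_le_one_of_set_injective
    (hf : ∀ (s : List α) p, p < s.length → Function.Injective fun y => f (s.set p y))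
    {s t : List α} (hlen : s.length = t.length) (hst : f s = f t) (h : editDistL s t ≤ 1) :
    s = t := by
  rcases eq_or_exists_set_of_editDistL_le_one hlen h with rfl | ⟨p, hp, y, rfl⟩
  · rfl
  · have : s[p] = y := hf s p hp (by simpa using hst)
    simp [← this]

lemma two_le_editDistL_of_set_injective
    (hf : ∀ (s : List α) p, p < s.length → Function.Injective fun y => f (s.set p y))
    {s t : List α} (hlen : s.length = t.length) (hst : f s = f t) (hne : s ≠ t) :
    2 ≤ editDistL s t := by
  by_contra h
  exact hne (eq_of_editDistL_le_one_of_set_injective hf hlen hst (by omega))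

lemma ncard_fiber_editDistL_le_one_of_mem
    (hf : ∀ (s : List α) p, p < s.length → Function.Injective fun y => f (s.set p y))
    {n : ℕ} {i : β} {s : List α} (hsn : s.length = n) (hs : f s = i) :
    {v ∈ {l : List α | l.length = n ∧ f l = i} | editDistL s v ≤ 1}.ncard = 1 := by
  rw [Set.ncard_eq_one]
  refine ⟨s, Set.eq_singleton_iff_unique_mem.mpr ⟨⟨⟨hsn, hs⟩, by simp⟩, ?_⟩⟩
  rintro v ⟨⟨hvn, hv⟩, h⟩
  exact (eq_of_editDistL_le_one_of_set_injective hf (hsn.trans hvn.symm) (hs.trans hv.symm)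
    h).symm

lemma ncard_fiber_editDistL_le_one_of_not_mem
    (hf : ∀ (s : List α) p, p < s.length → Function.Bijective fun y => f (s.set p y))
    {n : ℕ} {i : β} {s : List α} (hsn : s.length = n) (hs : f s ≠ i) :
    {v ∈ {l : List α | l.length = n ∧ f l = i} | editDistL s v ≤ 1}.ncard = n := by
  subst hsn
  choose y hy using fun p (hp : p < s.length) => (hf s p hp).surjective i
  apply Set.ncard_eq_of_bijective fun p hp => s.set p (y p hp)
  · rintro v ⟨⟨hvn, hv⟩, h⟩
    rcases eq_or_exists_set_of_editDistL_le_one hvn.symm h with rfl | ⟨p, hp, z, rfl⟩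
    · exact absurd hv hs
    · exact ⟨p, hp, (hf s p hp).injective ((hy p hp).trans hv.symm) ▸ rfl⟩
  · exact fun p hp => ⟨⟨by simp, hy p hp⟩, editDistL_set_le_one s p _⟩
  · intro p q hp hq hpq
    by_contra hne
    have hq' : y q hq = s[q] := by
      simpa [List.getElem?_set, hne, hq] using (congrArg (·[q]?) hpq).symm
    exact hs (by simpa [hq'] using hy q hq)

end Fiber

section ClassIndex

variable {G : Type*} [AddCommGroup G]

def classIndex : List G → G
  | [] => 0
  | [a] => a
  | c :: b :: l => classIndex (b :: l) - c

lemma classIndex_cons {l : List G} (hl : l ≠ []) (c : G) :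
    classIndex (c :: l) = classIndex l - c := by
  obtain ⟨b, l, rfl⟩ := List.exists_cons_of_ne_nil hl
  rfl

lemma classIndex_set_bijective (l : List G) (p : ℕ) (hp : p < l.length) :
    Function.Bijective fun y => classIndex (l.set p y) := by
  induction l generalizing p with
  | nil => simp at hp
  | cons c l ih =>
    cases p with
    | zero =>
      rcases eq_or_ne l [] with rfl | hl
      · exact Function.bijective_id
      · convert (Equiv.subLeft (classIndex l)).bijective using 1
        exact funext fun y => classIndex_cons hl y
    | succ p =>
      have hp : p < l.length := Nat.lt_of_succ_lt_succ hp
      convert (Equiv.subRight c).bijective.comp (ih p hp) using 1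
      have hne : ∀ y, l.set p y ≠ [] := fun y => by
        simpa [← List.length_pos_iff] using Nat.zero_lt_of_lt hp
      exact funext fun y => classIndex_cons (hne y) c

end ClassIndex

lemma mem_Bset_succ_iff {m n : ℕ} {i : ZMod m} {l : List (ZMod m)} :
    l ∈ Bset m (n + 1) i ↔ l.length = n + 1 ∧ classIndex l = i := by
  induction n generalizing i l with
  | zero =>
    rcases l with _ | ⟨a, _ | ⟨b, l⟩⟩ <;> simp [Bset, classIndex, eq_comm]
  | succ n ih =>
    rcases l with _ | ⟨c, l⟩
    · simp [Bset]
    · simp only [Bset, Set.mem_iUnion, Set.mem_image, ih, List.cons.injEq, exists_eq_right_right,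
        exists_eq_right, List.length_cons, Nat.add_right_cancel_iff, and_congr_right_iff]
      intro hlen
      rw [classIndex_cons (List.ne_nil_of_length_eq_add_one hlen), sub_eq_iff_eq_add]

lemma Bset_eq {m n : ℕ} (hn : 1 ≤ n) (i : ZMod m) :
    Bset m n i = {l | l.length = n ∧ classIndex l = i} := by
  obtain ⟨n, rfl⟩ := Nat.exists_eq_add_of_le' hn
  ext l
  exact mem_Bset_succ_iff

theorem stmt18_general (m : ℕ) (n : ℕ) (hn : 1 ≤ n) (i : ZMod m) :
    (∀ s ∈ Bset m n i, ∀ t ∈ Bset m n i, s ≠ t → 2 ≤ editDistL s t) ∧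
    (∀ s : List (ZMod m), s.length = n → s ∈ Bset m n i →
      Set.ncard {v ∈ Bset m n i | editDistL s v ≤ 1} = 1) ∧
    (∀ s : List (ZMod m), s.length = n → s ∉ Bset m n i →
      Set.ncard {v ∈ Bset m n i | editDistL s v ≤ 1} = n) := by
  have hinj (s : List (ZMod m)) p (hp : p < s.length) :=
    (classIndex_set_bijective s p hp).injective
  rw [Bset_eq hn]
  refine ⟨?_, ?_, ?_⟩
  · rintro s ⟨hs, rfl⟩ t ⟨ht, hti⟩ hst
    exact two_le_editDistL_of_set_injective hinj (hs.trans ht.symm) hti.symm hst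
  · exact fun s hsn hs => ncard_fiber_editDistL_le_one_of_mem hinj hsn hs.2
  · exact fun s hsn hs => ncard_fiber_editDistL_le_one_of_not_mem classIndex_set_bijective hsn
      fun h => hs ⟨hsn, h⟩

theorem stmt18 (m : ℕ) (hm : 2 ≤ m) (n : ℕ) (hn : 1 ≤ n) (i : ZMod m) :
    (∀ s ∈ Bset m n i, ∀ t ∈ Bset m n i, s ≠ t → 2 ≤ editDistL s t) ∧
    (∀ s : List (ZMod m), s.length = n → s ∈ Bset m n i →
      Set.ncard {v ∈ Bset m n i | editDistL s v ≤ 1} = 1) ∧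
    (∀ s : List (ZMod m), s.length = n → s ∉ Bset m n i →
      Set.ncard {v ∈ Bset m n i | editDistL s v ≤ 1} = n) :=
  stmt18_general m n hn i
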